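/- Let m ≥ 1, let D ⊂ ℝ^m be bounded, ρ ∈ (0,∞)^m, and let (Ψ_n)_{n≥1} be analytic maps on the complex domain D_ρ with values in ℂ^m, defining the one-parameter family of formal diffeomorphisms Ψ(x,μ) = x + Σ_{n≥1} Ψ_n(x) μⁿ. Then there exists a sequence (F_n)_{n≥1} of analytic vector fields on D_ρ such that, defining L_{1,n} = F_n and L_{m,n} = Σ_{j=1}^{n−m+1} L_{F_j} L_{m−1,n−j} for 2 ≤ m ≤ n (where L_F G = (DG)·F is the Lie derivative of G along F), one has for every k ≥ 1: Σ_{n=1}^{k} (1/n!) L_{n,k}(x) = Ψ_k(x) for all x ∈ D_ρ. Equivalently, the formal time-1 flow e^{L_{F_μ}}(x) = x + Σ_{n≥1}(1/n!) L_{F_μ}ⁿ(x) of the formal vector field F_μ = Σ_{n≥1} F_n μⁿ coincides with Ψ(x,μ) order by order in μ. -/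

import Mathlib

/-!
Solve for the `F_k` order by order. In `L_{n,k}` with `n ≥ 2` only the fields `F_j` with
`j ≤ k - n + 1 < k` occur, so the order-`k` identity `F_k + Σ_{n=2}^{k} (1/n!) L_{n,k} = Ψ_k`
determines `F_k` from `F_1, …, F_{k-1}`. Analyticity propagates along this recursion because
Lie derivatives of analytic maps along analytic fields are analytic.
-/

open Real Filter Set Classical

noncomputable section

/-- The complex neighbourhood `D_ρ = ⋃_{x∈D} {z ∈ ℂ^m : |z_i − x_i| < ρ_i}` of a set
`D ⊂ ℝ^m`. -/
def cplxNbhd (m : ℕ) (D : Set (Fin m → ℝ)) (ρ : Fin m → ℝ) : Set (Fin m → ℂ) :=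
  ⋃ x ∈ D, {z : Fin m → ℂ | ∀ i, ‖z i - (x i : ℂ)‖ < ρ i}

/-- The Lie derivative `L_F G = (DG)·F` of a map `G` along a vector field `F`. -/
def lieD {m : ℕ} (F G : (Fin m → ℂ) → (Fin m → ℂ)) : (Fin m → ℂ) → (Fin m → ℂ) :=
  fun z => fderiv ℂ G z (F z)

/-- The coefficient `L_{M,n}` of `μⁿ` in `L_{F_μ}^M(x)`, for `F_μ = Σ_{j≥1} F_j μʲ`. -/
def lieCoeff {m : ℕ} (F : ℕ → (Fin m → ℂ) → (Fin m → ℂ)) : ℕ → ℕ → (Fin m → ℂ) → (Fin m → ℂ)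
  | 0, _ => 0
  | 1, n => F n
  | (M + 2), n => fun z => ∑ j ∈ Finset.Icc 1 (n - (M + 2) + 1),
      lieD (F j) (lieCoeff F (M + 1) (n - j)) z

theorem lieCoeff_congr {m : ℕ} {F F' : ℕ → (Fin m → ℂ) → (Fin m → ℂ)} (M n : ℕ)
    (h : ∀ j, j ≤ n - M + 1 → F j = F' j) : lieCoeff F M n = lieCoeff F' M n := by
  induction M using Nat.strong_induction_on generalizing n with
  | _ M ih =>
    match M with
    | 0 => rfl
    | 1 => exact h n (by omega)
    | M + 2 =>
      funext z
      refine Finset.sum_congr rfl fun j hj => ?_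
      rw [Finset.mem_Icc] at hj
      rw [h j (by omega), ih (M + 1) (by omega) (n - j) fun j' hj' => h j' (by omega)]

theorem lieCoeff_of_two_le {m : ℕ} (F : ℕ → (Fin m → ℂ) → (Fin m → ℂ)) {M : ℕ} (n : ℕ)
    (hM : 2 ≤ M) :
    lieCoeff F M n = fun z => ∑ j ∈ Finset.Icc 1 (n - M + 1),
      lieD (F j) (lieCoeff F (M - 1) (n - j)) z := by
  obtain ⟨M, rfl⟩ : ∃ M', M = M' + 2 := ⟨M - 2, by omega⟩
  rfl

theorem AnalyticOnNhd.lieD {m : ℕ} {F G : (Fin m → ℂ) → (Fin m → ℂ)} {s : Set (Fin m → ℂ)}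
    (hF : AnalyticOnNhd ℂ F s) (hG : AnalyticOnNhd ℂ G s) :
    AnalyticOnNhd ℂ (lieD F G) s := fun z hz =>
  (ContinuousLinearMap.apply ℂ (Fin m → ℂ)).flip.analyticAt_bilinear (fderiv ℂ G z, F z)
    |>.comp₂ (hG.fderiv z hz) (hF z hz)

theorem lieCoeff_analyticOnNhd {m : ℕ} {F : ℕ → (Fin m → ℂ) → (Fin m → ℂ)}
    {s : Set (Fin m → ℂ)} (M n : ℕ) (hMn : M ≤ n)
    (hF : ∀ j, 1 ≤ j → j ≤ n - M + 1 → AnalyticOnNhd ℂ (F j) s) :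
    AnalyticOnNhd ℂ (lieCoeff F M n) s := by
  induction M using Nat.strong_induction_on generalizing n with
  | _ M ih =>
    match M with
    | 0 => exact analyticOnNhd_const
    | 1 => exact hF n (by omega) (by omega)
    | M + 2 =>
      refine Finset.analyticOnNhd_fun_sum _ fun j hj => ?_
      rw [Finset.mem_Icc] at hj
      refine (hF j hj.1 (by omega)).lieD (ih (M + 1) (by omega) (n - j) (by omega) ?_)
      exact fun j' h1 h2 => hF j' h1 (by omega)

/-- `F_k = Ψ_k − Σ_{n=2}^{k} (1/n!) L_{n,k}`; the truncation to `j < k` only serves to make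
the recursion well founded (see `interpolatingField_eq`). -/
def interpolatingField {m : ℕ} (Ψ : ℕ → (Fin m → ℂ) → (Fin m → ℂ)) (k : ℕ) :
    (Fin m → ℂ) → (Fin m → ℂ) :=
  Ψ k - ∑ n ∈ Finset.Icc 2 k, (1 / (n.factorial : ℂ)) •
    lieCoeff (fun j => if j < k then interpolatingField Ψ j else 0) n k
termination_by k

section InterpolatingField

variable {m : ℕ} (Ψ : ℕ → (Fin m → ℂ) → (Fin m → ℂ))

theorem interpolatingField_eq (k : ℕ) :
    interpolatingField Ψ k = Ψ k - ∑ n ∈ Finset.Icc 2 k, (1 / (n.factorial : ℂ)) •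
      lieCoeff (interpolatingField Ψ) n k := by
  rw [interpolatingField]
  congr 1
  refine Finset.sum_congr rfl fun n hn => ?_
  rw [Finset.mem_Icc] at hn
  congr 1
  exact lieCoeff_congr n k fun j hj => by simp [show j < k by omega]

theorem interpolatingField_analyticOnNhd {s : Set (Fin m → ℂ)}
    (hΨ : ∀ n, 1 ≤ n → AnalyticOnNhd ℂ (Ψ n) s) (k : ℕ) (hk : 1 ≤ k) :
    AnalyticOnNhd ℂ (interpolatingField Ψ k) s := by
  induction k using Nat.strong_induction_on with
  | _ k ih =>
    rw [interpolatingField_eq]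
    refine (hΨ k hk).sub (Finset.analyticOnNhd_sum _ fun n hn => ?_)
    rw [Finset.mem_Icc] at hn
    have hL : AnalyticOnNhd ℂ (lieCoeff (interpolatingField Ψ) n k) s :=
      lieCoeff_analyticOnNhd n k hn.2 fun j h1 h2 => ih j (by omega) h1
    exact fun z hz => analyticAt_const.smul (hL z hz)

theorem sum_lieCoeff_interpolatingField (k : ℕ) (hk : 1 ≤ k) :
    ∑ n ∈ Finset.Icc 1 k, (1 / (n.factorial : ℂ)) • lieCoeff (interpolatingField Ψ) n k =
      Ψ k := by
  rw [← Finset.insert_Icc_add_one_left_eq_Icc hk, Finset.sum_insert (by simp)]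
  simp only [Nat.factorial_one, Nat.cast_one, div_one, one_smul]
  change interpolatingField Ψ k + _ = _
  rw [interpolatingField_eq Ψ k]
  exact sub_add_cancel _ _

end InterpolatingField

theorem formal_interpolating_vector_field_general
    (m : ℕ) (D : Set (Fin m → ℝ))
    (ρ : Fin m → ℝ)
    (Ψ : ℕ → (Fin m → ℂ) → (Fin m → ℂ))
    (hΨ : ∀ n : ℕ, 1 ≤ n → AnalyticOnNhd ℂ (Ψ n) (cplxNbhd m D ρ)) :
    ∃ F : ℕ → (Fin m → ℂ) → (Fin m → ℂ),
      (∀ n : ℕ, 1 ≤ n → AnalyticOnNhd ℂ (F n) (cplxNbhd m D ρ)) ∧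
      ∃ L : ℕ → ℕ → (Fin m → ℂ) → (Fin m → ℂ),
        (∀ n : ℕ, L 1 n = F n) ∧
        (∀ M n : ℕ, 2 ≤ M → M ≤ n →
          L M n = fun z => ∑ j ∈ Finset.Icc 1 (n - M + 1),
            lieD (F j) (L (M - 1) (n - j)) z) ∧
        (∀ k : ℕ, 1 ≤ k → ∀ z ∈ cplxNbhd m D ρ,
          ∑ n ∈ Finset.Icc 1 k, (1 / (n.factorial : ℂ)) • L n k z = Ψ k z) := by
  refine ⟨interpolatingField Ψ, interpolatingField_analyticOnNhd Ψ hΨ,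
    lieCoeff (interpolatingField Ψ), fun n => rfl,
    fun M n hM _ => lieCoeff_of_two_le _ n hM, fun k hk z _ => ?_⟩
  simpa using congrFun (sum_lieCoeff_interpolatingField Ψ k hk) z

/-- Formal interpolation of a one-parameter family of diffeomorphisms
`Ψ(x,μ) = x + Σ_{n≥1} Ψ_n(x) μⁿ` by a formal vector field `F_μ = Σ_{n≥1} F_n μⁿ`:
there are analytic vector fields `F_n` on `D_ρ` such that, with
`L_{1,n} = F_n` and `L_{m,n} = Σ_{j=1}^{n−m+1} L_{F_j} L_{m−1,n−j}` for `2 ≤ m ≤ n`,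
one has `Σ_{n=1}^{k} (1/n!) L_{n,k} = Ψ_k` on `D_ρ` for every `k ≥ 1`; i.e. the formal
time-1 flow of `F_μ` coincides with `Ψ(·,μ)` order by order in `μ`. -/
theorem formal_interpolating_vector_field
    (m : ℕ) (hm : 1 ≤ m) (D : Set (Fin m → ℝ)) (hD : Bornology.IsBounded D)
    (ρ : Fin m → ℝ) (hρ : ∀ i, 0 < ρ i)
    (Ψ : ℕ → (Fin m → ℂ) → (Fin m → ℂ))
    (hΨ : ∀ n : ℕ, 1 ≤ n → AnalyticOnNhd ℂ (Ψ n) (cplxNbhd m D ρ)) :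
    ∃ F : ℕ → (Fin m → ℂ) → (Fin m → ℂ),
      (∀ n : ℕ, 1 ≤ n → AnalyticOnNhd ℂ (F n) (cplxNbhd m D ρ)) ∧
      ∃ L : ℕ → ℕ → (Fin m → ℂ) → (Fin m → ℂ),
        (∀ n : ℕ, L 1 n = F n) ∧
        (∀ M n : ℕ, 2 ≤ M → M ≤ n →
          L M n = fun z => ∑ j ∈ Finset.Icc 1 (n - M + 1),
            lieD (F j) (L (M - 1) (n - j)) z) ∧
        (∀ k : ℕ, 1 ≤ k → ∀ z ∈ cplxNbhd m D ρ,
          ∑ n ∈ Finset.Icc 1 k, (1 / (n.factorial : ℂ)) • L n k z = Ψ k z) :=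
  formal_interpolating_vector_field_general m D ρ Ψ hΨ
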